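/- arXiv:0809.3076 — 2 statements merged into one kernel-verified Lean document; each statement's English description precedes it below -/
import Mathlib

section
/- Let k be a field of characteristic different from 2, and let λ be a nonzero element of k. Let M be the 2×2 matrix !![λ, λ; 0, λ]. Then the k-subspace of 2×2 matrices A over k satisfying trace(A) = 0 and M * A = A * M is exactly the one-dimensional span of the matrix !![0, 1; 0, 0]. In particular this space of invariants has k-dimension 1. -/
open Matrix

/-- The fixed subspace of `sl₂(k)` under conjugation by `!![λ, λ; 0, λ]` is the
one-dimensional span of `!![0, 1; 0, 0]`. -/
theorem stmt_0 (k : Type*) [Field k] (h2 : (2 : k) ≠ 0) (lam : k) (hlam : lam ≠ 0) :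
    {A : Matrix (Fin 2) (Fin 2) k | Matrix.trace A = 0 ∧
        !![lam, lam; 0, lam] * A = A * !![lam, lam; 0, lam]} =
      (Submodule.span k ({!![0, 1; 0, 0]} : Set (Matrix (Fin 2) (Fin 2) k)) : Set _) ∧
    Module.finrank k
      (Submodule.span k ({!![0, 1; 0, 0]} : Set (Matrix (Fin 2) (Fin 2) k))) = 1 := by
  constructor
  · ext A
    simp only [Set.mem_setOf_eq, SetLike.mem_coe, Submodule.mem_span_singleton]
    constructor
    · rintro ⟨htr, hc⟩
      have htr' : A 0 0 + A 1 1 = 0 := by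
        simpa [Matrix.trace_fin_two] using htr
      have h00 := congrFun (congrFun hc 0) 0
      have h01 := congrFun (congrFun hc 0) 1
      simp [Matrix.mul_apply, Fin.sum_univ_two] at h00 h01
      have hc0 : A 1 0 = 0 := by
        have : lam * A 1 0 = 0 := by linear_combination h00
        exact (mul_eq_zero.mp this).resolve_left hlam
      have had : A 1 1 = A 0 0 := by
        have : lam * A 1 1 = lam * A 0 0 := by linear_combination h01
        exact mul_left_cancel₀ hlam this
      have ha : A 0 0 = 0 := by
        have : 2 * A 0 0 = 0 := by linear_combination htr' - had
        exact (mul_eq_zero.mp this).resolve_left h2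
      have h11 : A 1 1 = 0 := had.trans ha
      refine ⟨A 0 1, ?_⟩
      ext i j
      fin_cases i <;> fin_cases j <;> simp [ha, hc0, h11]
    · rintro ⟨μ, rfl⟩
      constructor
      · simp [Matrix.trace_fin_two]
      · ext i j
        fin_cases i <;> fin_cases j <;> simp [Matrix.mul_apply, Fin.sum_univ_two, mul_comm]
  · rw [finrank_span_singleton]
    intro h
    have := congrFun (congrFun h 0) 1
    simp at this
end

section
/- Let G be a group, A a commutative group, and H a subgroup of the product group G × A. Let P be a subgroup of G that is perfect (i.e., P equals its own commutator subgroup) and is contained in the image of H under the first projection G × A → G. Then P × {1} is contained in H; that is, for every g ∈ P the element (g, 1) lies in H. -/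
/-! Since `A` is abelian, `⁅H, H⁆ ≤ H` consists of elements `(g, 1)`, and its first projection is
`⁅π₁ H, π₁ H⁆ ⊇ ⁅P, P⁆ = P`. -/

namespace Subgroup

variable {G A : Type*} [Group G] [CommGroup A]

theorem commutator_eq_bot_of_commGroup (K L : Subgroup A) : ⁅K, L⁆ = ⊥ :=
  commutator_eq_bot_iff_le_centralizer.mpr fun a _ b _ => mul_comm b a

theorem snd_eq_one_of_mem_commutator {H : Subgroup (G × A)} {x : G × A} (hx : x ∈ ⁅H, H⁆) :
    x.2 = 1 := by
  have hsnd : x.2 ∈ ⁅H, H⁆.map (MonoidHom.snd G A) := ⟨x, hx, rfl⟩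
  rwa [map_commutator, commutator_eq_bot_of_commGroup, mem_bot] at hsnd

theorem mk_one_mem_of_mem_map_fst_commutator {H : Subgroup (G × A)} {g : G}
    (hg : g ∈ ⁅H.map (MonoidHom.fst G A), H.map (MonoidHom.fst G A)⁆) : ((g, 1) : G × A) ∈ H := by
  rw [← map_commutator] at hg
  obtain ⟨x, hx, rfl⟩ := hg
  convert H.commutator_le_self hx using 1
  exact Prod.ext rfl (snd_eq_one_of_mem_commutator hx).symm

end Subgroup

/-- If `H` is a subgroup of `G × A` with `A` commutative, and `P` is a perfect subgroup of `G`
contained in the image of `H` under the first projection, then `P × {1} ⊆ H`. -/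
theorem stmt_5 (G A : Type*) [Group G] [CommGroup A] (H : Subgroup (G × A))
    (P : Subgroup G) (hperf : ⁅P, P⁆ = P)
    (hle : P ≤ H.map (MonoidHom.fst G A)) :
    ∀ g ∈ P, ((g, 1) : G × A) ∈ H := by
  intro g hg
  rw [← hperf] at hg
  exact Subgroup.mk_one_mem_of_mem_map_fst_commutator (Subgroup.commutator_mono hle hle hg)
end
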